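/- arXiv:2504.11461 — 4 statements merged into one kernel-verified Lean document; each statement's English description precedes it below -/
import Mathlib

section
/- Pappus' theorem in the real affine plane: let A, B, C be three distinct collinear points in ℝ² and A', B', C' three distinct collinear points in ℝ², lying on two distinct lines ℓ and ℓ' respectively, with none of the six points lying on both lines. Suppose P is a point collinear with both {A, B'} and {A', B}, Q is a point collinear with both {B, C'} and {B', C}, and R is a point collinear with both {A, C'} and {A', C}, where in each case the two cross lines involved are distinct (so each of P, Q, R is the unique intersection point of its pair of cross lines). Then P, Q, R are collinear. -/
/-!
Two distinct lines through a common point are not parallel, so each of `P, Q, R` is given by an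
explicit rational formula in the coordinates of the six points (`lineInter`). Writing `C` and `C'`
as affine combinations of `A, B` and of `A', B'`, the vanishing of the cross product of `Q - P`
and `R - P` becomes, after clearing the three denominators, a polynomial identity.
-/

open AffineMap

local notation "ℝ²" => EuclideanSpace ℝ (Fin 2)

noncomputable def cross (u v : ℝ²) : ℝ := u 0 * v 1 - u 1 * v 0

lemma exists_eq_smul_of_cross_eq_zero {u v : ℝ²} (hu : u ≠ 0) (h : cross u v = 0) :
    ∃ c : ℝ, v = c • u := by
  have hnorm : u 0 ^ 2 + u 1 ^ 2 ≠ 0 := by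
    contrapose! hu
    ext i
    fin_cases i <;> simp only [Fin.zero_eta, Fin.mk_one, Fin.isValue, PiLp.zero_apply] <;>
      nlinarith [sq_nonneg (u 0), sq_nonneg (u 1)]
  -- `‖u‖² • v = ⟪v, u⟫ • u + cross u v • u⊥`
  refine ⟨(v 0 * u 0 + v 1 * u 1) / (u 0 ^ 2 + u 1 ^ 2), ?_⟩
  unfold cross at h
  ext i
  fin_cases i <;>
    simp only [Fin.zero_eta, Fin.mk_one, Fin.isValue, PiLp.smul_apply, smul_eq_mul] <;> field_simp
  · linear_combination (-u 1) * h
  · linear_combination u 0 * h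

lemma collinear_of_cross_eq_zero {X Y Z : ℝ²} (h : cross (Y - X) (Z - X) = 0) :
    Collinear ℝ {X, Y, Z} := by
  rcases eq_or_ne Y X with rfl | hXY
  · simpa using collinear_pair ℝ Y Z
  obtain ⟨c, hc⟩ := exists_eq_smul_of_cross_eq_zero (sub_ne_zero.2 hXY) h
  have hZ : Z ∈ line[ℝ, X, Y] := by
    rw [mem_affineSpan_pair_iff_exists_lineMap_eq]
    exact ⟨c, by rw [lineMap_apply, vsub_eq_sub, ← hc, vadd_eq_add, sub_add_cancel]⟩
  exact collinear_triple_of_mem_affineSpan_pair (left_mem_affineSpan_pair ℝ X Y)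
    (right_mem_affineSpan_pair ℝ X Y) hZ

lemma cross_ne_zero_of_affineSpan_ne {X Y Z W P : ℝ²} (hXY : X ≠ Y) (hZW : Z ≠ W)
    (hPXY : P ∈ line[ℝ, X, Y]) (hPZW : P ∈ line[ℝ, Z, W])
    (hne : line[ℝ, X, Y] ≠ line[ℝ, Z, W]) : cross (Y - X) (W - Z) ≠ 0 := by
  intro h
  obtain ⟨c, hc⟩ := exists_eq_smul_of_cross_eq_zero (sub_ne_zero.2 hXY.symm) h
  have hc0 : c ≠ 0 := by
    rintro rfl
    exact hZW (sub_eq_zero.1 (by simpa using hc)).symm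
  refine hne (AffineSubspace.ext_of_direction_eq ?_ ⟨P, hPXY, hPZW⟩)
  rw [direction_affineSpan, direction_affineSpan, vectorSpan_pair_rev, vectorSpan_pair_rev,
    vsub_eq_sub, vsub_eq_sub, hc, Submodule.span_singleton_smul_eq hc0.isUnit]

/-- The intersection point of the lines `XY` and `ZW`; junk when they are parallel. -/
noncomputable def lineInter (X Y Z W : ℝ²) : ℝ² :=
  lineMap X Y (cross (Z - X) (W - Z) / cross (Y - X) (W - Z))

lemma eq_lineInter {X Y Z W P : ℝ²} (hPXY : P ∈ line[ℝ, X, Y]) (hPZW : P ∈ line[ℝ, Z, W])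
    (hD : cross (Y - X) (W - Z) ≠ 0) : P = lineInter X Y Z W := by
  rw [mem_affineSpan_pair_iff_exists_lineMap_eq] at hPXY hPZW
  obtain ⟨s, rfl⟩ := hPXY
  obtain ⟨r, hr⟩ := hPZW
  have h0 := congrArg (· 0) hr
  have h1 := congrArg (· 1) hr
  simp only [lineMap_apply_module, PiLp.add_apply, PiLp.smul_apply, smul_eq_mul] at h0 h1
  unfold lineInter
  congr 1
  rw [eq_div_iff hD]
  simp only [cross, PiLp.sub_apply]
  linear_combination (W 0 - Z 0) * h1 - (W 1 - Z 1) * h0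

lemma cross_ne_zero_and_eq_lineInter_of_collinear {X Y Z W P : ℝ²} (hXY : X ≠ Y)
    (hZW : Z ≠ W) (hXYP : Collinear ℝ {X, Y, P}) (hZWP : Collinear ℝ {Z, W, P})
    (hne : line[ℝ, X, Y] ≠ line[ℝ, Z, W]) :
    cross (Y - X) (W - Z) ≠ 0 ∧ P = lineInter X Y Z W := by
  have hPXY : P ∈ line[ℝ, X, Y] :=
    hXYP.mem_affineSpan_of_mem_of_ne (by simp) (by simp) (by simp) hXY
  have hPZW : P ∈ line[ℝ, Z, W] :=
    hZWP.mem_affineSpan_of_mem_of_ne (by simp) (by simp) (by simp) hZW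
  have hD := cross_ne_zero_of_affineSpan_ne hXY hZW hPXY hPZW hne
  exact ⟨hD, eq_lineInter hPXY hPZW hD⟩

theorem collinear_lineInter_pappus {A B C A' B' C' : ℝ²} (hC : C ∈ line[ℝ, A, B])
    (hC' : C' ∈ line[ℝ, A', B']) (hP : cross (B' - A) (B - A') ≠ 0)
    (hQ : cross (C' - B) (C - B') ≠ 0) (hR : cross (C' - A) (C - A') ≠ 0) :
    Collinear ℝ {lineInter A B' A' B, lineInter B C' B' C, lineInter A C' A' C} := by
  rw [mem_affineSpan_pair_iff_exists_lineMap_eq] at hC hC'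
  obtain ⟨γ, rfl⟩ := hC
  obtain ⟨γ', rfl⟩ := hC'
  -- Translating `A` to the origin keeps the final polynomial identity small enough for `ring`.
  obtain ⟨b, rfl⟩ : ∃ b, B = b + A := ⟨B - A, (sub_add_cancel B A).symm⟩
  obtain ⟨a', rfl⟩ : ∃ a', A' = a' + A := ⟨A' - A, (sub_add_cancel A' A).symm⟩
  obtain ⟨b', rfl⟩ : ∃ b', B' = b' + A := ⟨B' - A, (sub_add_cancel B' A).symm⟩
  apply collinear_of_cross_eq_zero
  simp only [lineInter, lineMap_apply, vsub_eq_sub, vadd_eq_add, ← add_assoc,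
    add_sub_add_right_eq_sub, add_sub_cancel_right] at hP hQ hR ⊢
  -- Named denominators are atoms that `field_simp` knows to be nonzero.
  generalize hDP : cross b' (b - a') = DP at hP ⊢
  generalize hDQ : cross (γ' • (b' - a') + a' - b) (γ • b - b') = DQ at hQ ⊢
  generalize hDR : cross (γ' • (b' - a') + a') (γ • b - a') = DR at hR ⊢
  simp only [cross, PiLp.add_apply, PiLp.sub_apply, PiLp.smul_apply, smul_eq_mul] at hDP hDQ hDR ⊢
  field_simp
  subst hDP hDQ hDR
  ring

theorem pappus_affine_plane_general
    (A B C A' B' C' P Q R : EuclideanSpace ℝ (Fin 2))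
    -- the two lines
    (ℓ ℓ' : AffineSubspace ℝ (EuclideanSpace ℝ (Fin 2)))
    (hℓ : ℓ = affineSpan ℝ ({A, B} : Set (EuclideanSpace ℝ (Fin 2))))
    (hℓ' : ℓ' = affineSpan ℝ ({A', B'} : Set (EuclideanSpace ℝ (Fin 2))))
    (hCℓ : C ∈ ℓ) (hC'ℓ' : C' ∈ ℓ')
    (hnotboth : ∀ X ∈ ({A, B, C, A', B', C'} : Set (EuclideanSpace ℝ (Fin 2))),
      ¬(X ∈ ℓ ∧ X ∈ ℓ'))
    -- P on both cross lines AB' and A'B, the two cross lines being distinct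
    (hP₁ : Collinear ℝ ({A, B', P} : Set (EuclideanSpace ℝ (Fin 2))))
    (hP₂ : Collinear ℝ ({A', B, P} : Set (EuclideanSpace ℝ (Fin 2))))
    (hPd : affineSpan ℝ ({A, B'} : Set (EuclideanSpace ℝ (Fin 2))) ≠
           affineSpan ℝ ({A', B} : Set (EuclideanSpace ℝ (Fin 2))))
    -- Q on both cross lines BC' and B'C, the two cross lines being distinct
    (hQ₁ : Collinear ℝ ({B, C', Q} : Set (EuclideanSpace ℝ (Fin 2))))
    (hQ₂ : Collinear ℝ ({B', C, Q} : Set (EuclideanSpace ℝ (Fin 2))))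
    (hQd : affineSpan ℝ ({B, C'} : Set (EuclideanSpace ℝ (Fin 2))) ≠
           affineSpan ℝ ({B', C} : Set (EuclideanSpace ℝ (Fin 2))))
    -- R on both cross lines AC' and A'C, the two cross lines being distinct
    (hR₁ : Collinear ℝ ({A, C', R} : Set (EuclideanSpace ℝ (Fin 2))))
    (hR₂ : Collinear ℝ ({A', C, R} : Set (EuclideanSpace ℝ (Fin 2))))
    (hRd : affineSpan ℝ ({A, C'} : Set (EuclideanSpace ℝ (Fin 2))) ≠
           affineSpan ℝ ({A', C} : Set (EuclideanSpace ℝ (Fin 2)))) :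
    Collinear ℝ ({P, Q, R} : Set (EuclideanSpace ℝ (Fin 2))) := by
  subst hℓ hℓ'
  have hA := left_mem_affineSpan_pair ℝ A B
  have hB := right_mem_affineSpan_pair ℝ A B
  have hA' := left_mem_affineSpan_pair ℝ A' B'
  have hB' := right_mem_affineSpan_pair ℝ A' B'
  have hsep : ∀ X ∈ ({A, B, C, A', B', C'} : Set ℝ²), X ∈ line[ℝ, A, B] →
      ∀ Y ∈ line[ℝ, A', B'], X ≠ Y :=
    fun X hX hXℓ Y hYℓ' hXY => hnotboth X hX ⟨hXℓ, hXY ▸ hYℓ'⟩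
  obtain ⟨hDP, rfl⟩ := cross_ne_zero_and_eq_lineInter_of_collinear
    (hsep A (by simp) hA B' hB') (hsep B (by simp) hB A' hA').symm hP₁ hP₂ hPd
  obtain ⟨hDQ, rfl⟩ := cross_ne_zero_and_eq_lineInter_of_collinear
    (hsep B (by simp) hB C' hC'ℓ') (hsep C (by simp) hCℓ B' hB').symm hQ₁ hQ₂ hQd
  obtain ⟨hDR, rfl⟩ := cross_ne_zero_and_eq_lineInter_of_collinear
    (hsep A (by simp) hA C' hC'ℓ') (hsep C (by simp) hCℓ A' hA').symm hR₁ hR₂ hRd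
  exact collinear_lineInter_pappus hCℓ hC'ℓ' hDP hDQ hDR

/-- Pappus' theorem in the real affine plane: if `A, B, C` are distinct collinear points
on a line `ℓ` and `A', B', C'` are distinct collinear points on a different line `ℓ'`,
with none of the six points on both lines, and `P`, `Q`, `R` are the intersection points
of the cross lines `AB' ∩ A'B`, `BC' ∩ B'C`, `AC' ∩ A'C` (each pair of cross lines
being distinct), then `P, Q, R` are collinear. -/
theorem pappus_affine_plane
    (A B C A' B' C' P Q R : EuclideanSpace ℝ (Fin 2))
    (hAB : A ≠ B) (hAC : A ≠ C) (hBC : B ≠ C)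
    (hA'B' : A' ≠ B') (hA'C' : A' ≠ C') (hB'C' : B' ≠ C')
    -- the two lines
    (ℓ ℓ' : AffineSubspace ℝ (EuclideanSpace ℝ (Fin 2)))
    (hℓ : ℓ = affineSpan ℝ ({A, B} : Set (EuclideanSpace ℝ (Fin 2))))
    (hℓ' : ℓ' = affineSpan ℝ ({A', B'} : Set (EuclideanSpace ℝ (Fin 2))))
    (hCℓ : C ∈ ℓ) (hC'ℓ' : C' ∈ ℓ')
    (hll : ℓ ≠ ℓ')
    (hnotboth : ∀ X ∈ ({A, B, C, A', B', C'} : Set (EuclideanSpace ℝ (Fin 2))),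
      ¬(X ∈ ℓ ∧ X ∈ ℓ'))
    -- P on both cross lines AB' and A'B, the two cross lines being distinct
    (hP₁ : Collinear ℝ ({A, B', P} : Set (EuclideanSpace ℝ (Fin 2))))
    (hP₂ : Collinear ℝ ({A', B, P} : Set (EuclideanSpace ℝ (Fin 2))))
    (hPd : affineSpan ℝ ({A, B'} : Set (EuclideanSpace ℝ (Fin 2))) ≠
           affineSpan ℝ ({A', B} : Set (EuclideanSpace ℝ (Fin 2))))
    -- Q on both cross lines BC' and B'C, the two cross lines being distinct
    (hQ₁ : Collinear ℝ ({B, C', Q} : Set (EuclideanSpace ℝ (Fin 2))))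
    (hQ₂ : Collinear ℝ ({B', C, Q} : Set (EuclideanSpace ℝ (Fin 2))))
    (hQd : affineSpan ℝ ({B, C'} : Set (EuclideanSpace ℝ (Fin 2))) ≠
           affineSpan ℝ ({B', C} : Set (EuclideanSpace ℝ (Fin 2))))
    -- R on both cross lines AC' and A'C, the two cross lines being distinct
    (hR₁ : Collinear ℝ ({A, C', R} : Set (EuclideanSpace ℝ (Fin 2))))
    (hR₂ : Collinear ℝ ({A', C, R} : Set (EuclideanSpace ℝ (Fin 2))))
    (hRd : affineSpan ℝ ({A, C'} : Set (EuclideanSpace ℝ (Fin 2))) ≠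
           affineSpan ℝ ({A', C} : Set (EuclideanSpace ℝ (Fin 2)))) :
    Collinear ℝ ({P, Q, R} : Set (EuclideanSpace ℝ (Fin 2))) :=
  pappus_affine_plane_general A B C A' B' C' P Q R ℓ ℓ' hℓ hℓ' hCℓ hC'ℓ' hnotboth hP₁ hP₂ hPd hQ₁
    hQ₂ hQd hR₁ hR₂ hRd
end

section
/- Let O, A, B, C be affinely independent points in ℝ³ (the vertices of a tetrahedron). Let A' be a point on line OA distinct from O and A, let B' be a point on line OB distinct from O and B, and let C' be a point on line OC distinct from O and C. Suppose P lies on both line BC and line B'C', Q lies on both line AC and line A'C', and R lies on both line AB and line A'B'. Then the four points O, P, Q, R are coplanar. -/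
/-!
`P`, `Q`, `R` lie both on the plane `ABC` and on the plane through `A'`, `B'`, `C'`. These two
planes differ: `A'` lies on the line `OA`, and that line meets the plane `ABC` only in `A`,
since `O` is off it. Two distinct planes meet in at most a line, so `P`, `Q`, `R` are
collinear, and a line together with one more point `O` is coplanar.
-/

open Module

section

variable {k V P : Type*} [Field k] [AddCommGroup V] [Module k V] [AddTorsor V P]

theorem collinear_inf_affineSpan_of_not_le {s : Set P} (hs : Coplanar k s)
    {U : AffineSubspace k P} (hsU : ¬affineSpan k s ≤ U) :
    Collinear k ((U ⊓ affineSpan k s : AffineSubspace k P) : Set P) := by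
  rcases ((U ⊓ affineSpan k s : AffineSubspace k P) : Set P).eq_empty_or_nonempty with h | h
  · rw [h]
    exact collinear_empty k P
  have := hs.finiteDimensional_vectorSpan
  have hlt := AffineSubspace.direction_lt_of_nonempty (inf_lt_right.2 hsU) h
  rw [direction_affineSpan] at hlt
  have : FiniteDimensional k (U ⊓ affineSpan k s).direction :=
    Submodule.finiteDimensional_of_le hlt.le
  have hrank_lt := Submodule.finrank_lt_finrank_of_lt hlt
  have hrank_s := coplanar_iff_finrank_le_two.1 hs
  change Module.rank k (U ⊓ affineSpan k s).direction ≤ 1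
  rw [← Module.finrank_eq_rank]
  exact_mod_cast (by omega : finrank k (U ⊓ affineSpan k s).direction ≤ 1)

theorem AffineSubspace.left_mem_of_mem_affineSpan_pair {S : AffineSubspace k P} {p q x : P}
    (hx : x ∈ line[k, p, q]) (hxq : x ≠ q) (hxS : x ∈ S) (hqS : q ∈ S) : p ∈ S := by
  have hp : p ∈ line[k, x, q] :=
    (collinear_insert_of_mem_affineSpan_pair hx).mem_affineSpan_of_mem_of_ne
      (by simp) (by simp) (by simp) hxq
  exact affineSpan_pair_le_of_mem_of_mem hxS hqS hp

theorem AffineIndependent.notMem_affineSpan_triple {p₀ p₁ p₂ p₃ : P}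
    (h : AffineIndependent k ![p₀, p₁, p₂, p₃]) : p₀ ∉ affineSpan k {p₁, p₂, p₃} := by
  have himage : ![p₀, p₁, p₂, p₃] '' (Set.univ \ {0}) = {p₁, p₂, p₃} := by
    ext x
    simp [Fin.exists_fin_succ, eq_comm]
  rw [← himage]
  exact h.notMem_affineSpan_sdiff 0 Set.univ

end

theorem tetrahedron_OPQR_coplanar_general
    (O A B C A' B' C' P Q R : EuclideanSpace ℝ (Fin 3))
    (hindep : AffineIndependent ℝ ![O, A, B, C])
    (hA' : A' ∈ affineSpan ℝ ({O, A} : Set (EuclideanSpace ℝ (Fin 3))))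
    (hA'A : A' ≠ A)
    (hP₁ : P ∈ affineSpan ℝ ({B, C} : Set (EuclideanSpace ℝ (Fin 3))))
    (hP₂ : P ∈ affineSpan ℝ ({B', C'} : Set (EuclideanSpace ℝ (Fin 3))))
    (hQ₁ : Q ∈ affineSpan ℝ ({A, C} : Set (EuclideanSpace ℝ (Fin 3))))
    (hQ₂ : Q ∈ affineSpan ℝ ({A', C'} : Set (EuclideanSpace ℝ (Fin 3))))
    (hR₁ : R ∈ affineSpan ℝ ({A, B} : Set (EuclideanSpace ℝ (Fin 3))))
    (hR₂ : R ∈ affineSpan ℝ ({A', B'} : Set (EuclideanSpace ℝ (Fin 3)))) :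
    Coplanar ℝ ({O, P, Q, R} : Set (EuclideanSpace ℝ (Fin 3))) := by
  set U := affineSpan ℝ ({A, B, C} : Set (EuclideanSpace ℝ (Fin 3)))
  set W := affineSpan ℝ ({A', B', C'} : Set (EuclideanSpace ℝ (Fin 3)))
  have hWU : ¬W ≤ U := fun hle => hindep.notMem_affineSpan_triple <|
    AffineSubspace.left_mem_of_mem_affineSpan_pair hA' hA'A
      (hle (mem_affineSpan ℝ (by simp))) (mem_affineSpan ℝ (by simp))
  have hPQR : ({P, Q, R} : Set (EuclideanSpace ℝ (Fin 3))) ⊆ (U ⊓ W : AffineSubspace ℝ _) := by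
    have hline {X Y Z : EuclideanSpace ℝ (Fin 3)} {S : Set (EuclideanSpace ℝ (Fin 3))}
        (hX : X ∈ S) (hY : Y ∈ S) (hZ : Z ∈ affineSpan ℝ {X, Y}) : Z ∈ affineSpan ℝ S :=
      affineSpan_pair_le_of_mem_of_mem (mem_affineSpan ℝ hX) (mem_affineSpan ℝ hY) hZ
    simp only [Set.insert_subset_iff, Set.singleton_subset_iff, SetLike.mem_coe,
      AffineSubspace.mem_inf_iff]
    refine ⟨⟨hline ?_ ?_ hP₁, hline ?_ ?_ hP₂⟩, ⟨hline ?_ ?_ hQ₁, hline ?_ ?_ hQ₂⟩,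
      hline ?_ ?_ hR₁, hline ?_ ?_ hR₂⟩ <;> simp
  exact ((collinear_inf_affineSpan_of_not_le (coplanar_triple ℝ A' B' C') hWU).subset
    hPQR).coplanar_insert O

/-- Let `O, A, B, C` be affinely independent points in `ℝ³`, and let `A'`, `B'`, `C'`
lie on the lines `OA`, `OB`, `OC` respectively, each distinct from the corresponding
two vertices. If `P` lies on both lines `BC` and `B'C'`, `Q` on both lines `AC` and
`A'C'`, and `R` on both lines `AB` and `A'B'`, then `O, P, Q, R` are coplanar. -/
theorem tetrahedron_OPQR_coplanar
    (O A B C A' B' C' P Q R : EuclideanSpace ℝ (Fin 3))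
    (hindep : AffineIndependent ℝ ![O, A, B, C])
    (hA' : A' ∈ affineSpan ℝ ({O, A} : Set (EuclideanSpace ℝ (Fin 3))))
    (hA'O : A' ≠ O) (hA'A : A' ≠ A)
    (hB' : B' ∈ affineSpan ℝ ({O, B} : Set (EuclideanSpace ℝ (Fin 3))))
    (hB'O : B' ≠ O) (hB'B : B' ≠ B)
    (hC' : C' ∈ affineSpan ℝ ({O, C} : Set (EuclideanSpace ℝ (Fin 3))))
    (hC'O : C' ≠ O) (hC'C : C' ≠ C)
    (hP₁ : P ∈ affineSpan ℝ ({B, C} : Set (EuclideanSpace ℝ (Fin 3))))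
    (hP₂ : P ∈ affineSpan ℝ ({B', C'} : Set (EuclideanSpace ℝ (Fin 3))))
    (hQ₁ : Q ∈ affineSpan ℝ ({A, C} : Set (EuclideanSpace ℝ (Fin 3))))
    (hQ₂ : Q ∈ affineSpan ℝ ({A', C'} : Set (EuclideanSpace ℝ (Fin 3))))
    (hR₁ : R ∈ affineSpan ℝ ({A, B} : Set (EuclideanSpace ℝ (Fin 3))))
    (hR₂ : R ∈ affineSpan ℝ ({A', B'} : Set (EuclideanSpace ℝ (Fin 3)))) :
    Coplanar ℝ ({O, P, Q, R} : Set (EuclideanSpace ℝ (Fin 3))) :=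
  tetrahedron_OPQR_coplanar_general O A B C A' B' C' P Q R hindep hA' hA'A hP₁ hP₂ hQ₁ hQ₂ hR₁ hR₂
end

section
/- Buck's upper bound on chambers: let H₁, …, Hₙ be n affine hyperplanes in ℝ^d, where H_i = {x | ⟪a_i, x⟫ = b_i} with a_i ≠ 0. Then the complement ℝ^d \ (H₁ ∪ ⋯ ∪ Hₙ) has finitely many connected components, and the number of connected components is at most ∑_{i=0}^{d} C(n, i). -/
/-!
A point off the hyperplanes has a sign vector recording on which side of each hyperplane it lies.
The points with a given sign vector form an open convex chamber, so the sign vector is locally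
constant on the complement and separates its components: the components inject into the realized
sign vectors. These are counted by deletion and restriction. Removing the last hyperplane merges
exactly the pairs of chambers it separates; the chamber of the smaller arrangement containing
such a pair is cut by the hyperplane (by convexity), so it meets the hyperplane and yields a
chamber of the arrangement induced on it, in one dimension less. Pascal's rule closes the
induction. Hyperplanes are given by linear functionals, so that the induced arrangement is a
mere restriction to the kernel.
-/
open scoped RealInnerProductSpace

open Finset Module

variable {E ι : Type*} [AddCommGroup E] [Module ℝ E]

def signCell (f : ι → E →ₗ[ℝ] ℝ) (b : ι → ℝ) (s : ι → Bool) : Set E :=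
  {x | ∀ i, if s i then b i < f i x else f i x < b i}

noncomputable def signVector (f : ι → E →ₗ[ℝ] ℝ) (b : ι → ℝ) (x : E) : ι → Bool :=
  fun i => decide (b i < f i x)

def realizedSigns (f : ι → E →ₗ[ℝ] ℝ) (b : ι → ℝ) : Set (ι → Bool) :=
  {s | (signCell f b s).Nonempty}

section signCell

variable (f : ι → E →ₗ[ℝ] ℝ) (b : ι → ℝ) (s : ι → Bool)

theorem signCell_eq_iInter :
    signCell f b s = ⋂ i, if s i then {x | b i < f i x} else {x | f i x < b i} := by
  ext x
  simp only [signCell, Set.mem_ofPred_eq, Set.mem_iInter]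
  exact forall_congr' fun i => by split_ifs <;> rfl

theorem convex_signCell : Convex ℝ (signCell f b s) := by
  rw [signCell_eq_iInter]
  refine convex_iInter fun i => ?_
  split_ifs
  · exact convex_halfSpace_gt (f i).isLinear (b i)
  · exact convex_halfSpace_lt (f i).isLinear (b i)

theorem isOpen_signCell [TopologicalSpace E] [Finite ι] (hf : ∀ i, Continuous (f i)) :
    IsOpen (signCell f b s) := by
  rw [signCell_eq_iInter]
  refine isOpen_iInter_of_finite fun i => ?_
  split_ifs
  · exact isOpen_lt continuous_const (hf i)
  · exact isOpen_lt (hf i) continuous_const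

theorem signCell_subset_compl_iUnion : signCell f b s ⊆ (⋃ i, {x | f i x = b i})ᶜ := by
  intro x hx
  simp only [Set.mem_compl_iff, Set.mem_iUnion, Set.mem_ofPred_eq, not_exists]
  intro i
  have := hx i
  split_ifs at this
  · exact this.ne'
  · exact this.ne

theorem signVector_eq_iff_mem_signCell {x : E} (hx : ∀ i, f i x ≠ b i) :
    signVector f b x = s ↔ x ∈ signCell f b s := by
  simp only [signVector, signCell, Set.mem_ofPred_eq, funext_iff]
  refine forall_congr' fun i => ?_
  cases s i
  · simpa using (hx i).le_iff_lt
  · simp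

theorem mem_signCell_sub (p : E) {x : E} :
    x - p ∈ signCell f (fun i => b i - f i p) s ↔ x ∈ signCell f b s := by
  simp only [signCell, Set.mem_ofPred_eq, map_sub, sub_lt_sub_iff_right]

end signCell

theorem sum_range_choose_succ (n d : ℕ) :
    ∑ i ∈ range (d + 1), (n + 1).choose i
      = ∑ i ∈ range (d + 1), n.choose i + ∑ i ∈ range d, n.choose i := by
  rw [sum_range_succ', sum_range_succ' (fun i => n.choose i)]
  simp only [Nat.choose_succ_succ, sum_add_distrib, Nat.choose_zero_right]
  ring

theorem mem_signCell_snoc {n : ℕ} (f : Fin (n + 1) → E →ₗ[ℝ] ℝ) (b : Fin (n + 1) → ℝ)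
    (t : Fin n → Bool) (c : Bool) {x : E} :
    x ∈ signCell f b (Fin.snoc t c) ↔ x ∈ signCell (Fin.init f) (Fin.init b) t ∧
      if c then b (Fin.last n) < f (Fin.last n) x else f (Fin.last n) x < b (Fin.last n) := by
  simp only [signCell, Set.mem_ofPred_eq, Fin.forall_fin_succ', Fin.snoc_castSucc, Fin.snoc_last,
    Fin.init]

theorem ncard_realizedSigns_le_add {n : ℕ} (f : Fin (n + 1) → E →ₗ[ℝ] ℝ) (b : Fin (n + 1) → ℝ) :
    (realizedSigns f b).ncard ≤ (realizedSigns (Fin.init f) (Fin.init b)).ncard +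
      {t | (signCell f b (Fin.snoc t true)).Nonempty ∧
        (signCell f b (Fin.snoc t false)).Nonempty}.ncard := by
  set A := {t | (signCell f b (Fin.snoc t true)).Nonempty}
  set B := {t | (signCell f b (Fin.snoc t false)).Nonempty}
  have hcover : realizedSigns f b ⊆ (Fin.snoc · true) '' A ∪ (Fin.snoc · false) '' B := by
    intro s hs
    obtain ⟨t, c, rfl⟩ : ∃ t c, s = Fin.snoc t c := ⟨_, _, (Fin.snoc_init_self s).symm⟩
    cases c
    · exact Or.inr ⟨t, hs, rfl⟩
    · exact Or.inl ⟨t, hs, rfl⟩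
  have hunion : A ∪ B ⊆ realizedSigns (Fin.init f) (Fin.init b) := by
    rintro t (⟨x, hx⟩ | ⟨x, hx⟩) <;> exact ⟨x, ((mem_signCell_snoc f b t _).mp hx).1⟩
  calc (realizedSigns f b).ncard
      ≤ ((Fin.snoc · true) '' A ∪ (Fin.snoc · false) '' B).ncard := Set.ncard_le_ncard hcover
    _ ≤ A.ncard + B.ncard :=
        (Set.ncard_union_le _ _).trans (add_le_add (Set.ncard_image_le) (Set.ncard_image_le))
    _ = (A ∪ B).ncard + (A ∩ B).ncard := (Set.ncard_union_add_ncard_inter A B).symm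
    _ ≤ _ := add_le_add_left (Set.ncard_le_ncard hunion) _

theorem exists_mem_apply_eq {s : Set E} (hs : Convex ℝ s) (g : E →ₗ[ℝ] ℝ) {x y : E} {e : ℝ}
    (hx : x ∈ s) (hy : y ∈ s) (hxe : g x ≤ e) (hye : e ≤ g y) : ∃ z ∈ s, g z = e :=
  (convex_iff_ordConnected.mp (hs.linear_image g)).out ⟨x, hx, rfl⟩ ⟨y, hy, rfl⟩ ⟨hxe, hye⟩

theorem signCell_inter_hyperplane_subset_realizedSigns_ker (f : ι → E →ₗ[ℝ] ℝ) (b : ι → ℝ)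
    (g : E →ₗ[ℝ] ℝ) {p : E} :
    {t | (signCell f b t ∩ {x | g x = g p}).Nonempty} ⊆
      realizedSigns (fun i => (f i).domRestrict (LinearMap.ker g)) (fun i => b i - f i p) := by
  rintro t ⟨x, hx, hxp⟩
  have hker : x - p ∈ LinearMap.ker g := by simpa [sub_eq_zero] using hxp
  exact ⟨⟨x - p, hker⟩, (mem_signCell_sub f b t p).mpr hx⟩

theorem exists_mem_signCell_init_of_snoc {n : ℕ} (f : Fin (n + 1) → E →ₗ[ℝ] ℝ)
    (b : Fin (n + 1) → ℝ) {t : Fin n → Bool} (hpos : (signCell f b (Fin.snoc t true)).Nonempty)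
    (hneg : (signCell f b (Fin.snoc t false)).Nonempty) :
    ∃ x ∈ signCell (Fin.init f) (Fin.init b) t, ∃ y ∈ signCell (Fin.init f) (Fin.init b) t,
      f (Fin.last n) y < b (Fin.last n) ∧ b (Fin.last n) < f (Fin.last n) x := by
  obtain ⟨x, hx⟩ := hpos
  obtain ⟨y, hy⟩ := hneg
  rw [mem_signCell_snoc] at hx hy
  exact ⟨x, hx.1, y, hy.1, hy.2, hx.2⟩

theorem ncard_realizedSigns_le [FiniteDimensional ℝ E] {n : ℕ} (f : Fin n → E →ₗ[ℝ] ℝ)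
    (b : Fin n → ℝ) :
    (realizedSigns f b).ncard ≤ ∑ i ∈ range (finrank ℝ E + 1), n.choose i := by
  induction n generalizing E with
  | zero =>
    calc (realizedSigns f b).ncard ≤ Nat.card (Fin 0 → Bool) := Set.ncard_le_card _
      _ = (0).choose 0 := by simp
      _ ≤ _ := single_le_sum (fun i _ => Nat.zero_le _) (by simp)
  | succ n ih =>
    set T := {t | (signCell f b (Fin.snoc t true)).Nonempty ∧
      (signCell f b (Fin.snoc t false)).Nonempty}
    have hT : T.ncard ≤ ∑ i ∈ range (finrank ℝ E), n.choose i := by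
      rcases T.eq_empty_or_nonempty with hT | ⟨t, hpos, hneg⟩
      · simp [hT]
      have hg : f (Fin.last n) ≠ 0 := by
        obtain ⟨x, -, y, -, hy, hx⟩ := exists_mem_signCell_init_of_snoc f b hpos hneg
        exact fun h => (hy.trans hx).ne (by simp [h])
      obtain ⟨p, hp⟩ := LinearMap.surjective hg (b (Fin.last n))
      have hsub : T ⊆ {t | (signCell (Fin.init f) (Fin.init b) t ∩
          {x | f (Fin.last n) x = f (Fin.last n) p}).Nonempty} := by
        rintro t ⟨hpos, hneg⟩
        obtain ⟨x, hx, y, hy, hyg, hxg⟩ := exists_mem_signCell_init_of_snoc f b hpos hneg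
        exact exists_mem_apply_eq (convex_signCell _ _ t) _ hy hx (hp ▸ hyg.le) (hp ▸ hxg.le)
      calc T.ncard ≤ _ := Set.ncard_le_ncard
            (hsub.trans (signCell_inter_hyperplane_subset_realizedSigns_ker _ _ _))
        _ ≤ ∑ i ∈ range (finrank ℝ (LinearMap.ker (f (Fin.last n))) + 1), n.choose i := ih _ _
        _ = _ := by rw [Module.Dual.finrank_ker_add_one_of_ne_zero hg]
    calc (realizedSigns f b).ncard
        ≤ (realizedSigns (Fin.init f) (Fin.init b)).ncard + T.ncard :=
          ncard_realizedSigns_le_add f b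
      _ ≤ ∑ i ∈ range (finrank ℝ E + 1), n.choose i + ∑ i ∈ range (finrank ℝ E), n.choose i :=
          add_le_add (ih _ _) hT
      _ = _ := (sum_range_choose_succ n _).symm

section topology

variable [TopologicalSpace E] [Finite ι] {f : ι → E →ₗ[ℝ] ℝ} (b : ι → ℝ)

theorem isLocallyConstant_signVector (hf : ∀ i, Continuous (f i)) :
    IsLocallyConstant fun x : ((⋃ i, {x | f i x = b i})ᶜ : Set E) => signVector f b x := by
  refine IsLocallyConstant.iff_isOpen_fiber.mpr fun s => ?_
  convert (isOpen_signCell f b s hf).preimage continuous_subtype_val using 1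
  ext ⟨x, hx⟩
  simp only [Set.mem_compl_iff, Set.mem_iUnion, not_exists] at hx
  exact signVector_eq_iff_mem_signCell f b s hx

theorem finite_connectedComponents_compl_iUnion_and_card_le [ContinuousAdd E]
    [ContinuousSMul ℝ E] (hf : ∀ i, Continuous (f i)) :
    Finite (ConnectedComponents ((⋃ i, {x | f i x = b i})ᶜ : Set E)) ∧
      Nat.card (ConnectedComponents ((⋃ i, {x | f i x = b i})ᶜ : Set E)) ≤
        (realizedSigns f b).ncard := by
  set U : Set E := (⋃ i, {x | f i x = b i})ᶜ
  have hU : ∀ x : U, ∀ i, f i x ≠ b i := fun ⟨x, hx⟩ => by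
    simpa only [U, Set.mem_compl_iff, Set.mem_iUnion, not_exists, Set.mem_ofPred_eq] using hx
  have hσ := (isLocallyConstant_signVector b hf).continuous
  have hmem : ∀ x : U, (x : E) ∈ signCell f b (signVector f b x) := fun x =>
    (signVector_eq_iff_mem_signCell f b _ (hU x)).mp rfl
  let φ : ConnectedComponents U → realizedSigns f b := fun c =>
    ⟨hσ.connectedComponentsLift c, by
      obtain ⟨x, rfl⟩ := ConnectedComponents.surjective_coe c
      exact ⟨x, hσ.connectedComponentsLift_apply_coe x ▸ hmem x⟩⟩
  have hφ : Function.Injective φ := by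
    intro c₁ c₂ h
    obtain ⟨x, rfl⟩ := ConnectedComponents.surjective_coe c₁
    obtain ⟨y, rfl⟩ := ConnectedComponents.surjective_coe c₂
    have hxy : signVector f b x = signVector f b y := by
      simpa [φ, hσ.connectedComponentsLift_apply_coe] using congrArg Subtype.val h
    set s := signVector f b x
    have hpre : IsPreconnected (Subtype.val ⁻¹' signCell f b s : Set U) := by
      rw [← Topology.IsInducing.subtypeVal.isPreconnected_image, Subtype.image_preimage_coe,
        Set.inter_eq_self_of_subset_right (signCell_subset_compl_iUnion f b s)]
      exact (convex_signCell f b s).isPreconnected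
    exact ConnectedComponents.coe_eq_coe'.mpr
      (hpre.subset_connectedComponent (hmem x) (hxy ▸ hmem y)) |>.symm
  exact ⟨Finite.of_injective φ hφ, Nat.card_le_card_of_injective φ hφ⟩

end topology

theorem buck_chamber_upper_bound_general (d n : ℕ)
    (a : Fin n → EuclideanSpace ℝ (Fin d)) (b : Fin n → ℝ) :
    Finite (ConnectedComponents
      ((⋃ i : Fin n, {x : EuclideanSpace ℝ (Fin d) | ⟪a i, x⟫ = b i})ᶜ :
        Set (EuclideanSpace ℝ (Fin d)))) ∧
    Nat.card (ConnectedComponents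
      ((⋃ i : Fin n, {x : EuclideanSpace ℝ (Fin d) | ⟪a i, x⟫ = b i})ᶜ :
        Set (EuclideanSpace ℝ (Fin d)))) ≤
      ∑ i ∈ Finset.range (d + 1), n.choose i := by
  let f : Fin n → EuclideanSpace ℝ (Fin d) →ₗ[ℝ] ℝ := fun i => innerₛₗ ℝ (a i)
  obtain ⟨hfin, hcard⟩ := finite_connectedComponents_compl_iUnion_and_card_le (f := f) b
    fun i => (innerSL ℝ (a i)).continuous
  refine ⟨hfin, hcard.trans ?_⟩
  simpa only [finrank_euclideanSpace_fin] using ncard_realizedSigns_le f b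

/-- Buck's upper bound: the complement of a union of `n` affine hyperplanes in `ℝ^d`
has finitely many connected components, and at most `∑_{i=0}^{d} C(n,i)` of them. -/
theorem buck_chamber_upper_bound (d n : ℕ)
    (a : Fin n → EuclideanSpace ℝ (Fin d)) (b : Fin n → ℝ)
    (ha : ∀ i, a i ≠ 0) :
    Finite (ConnectedComponents
      ((⋃ i : Fin n, {x : EuclideanSpace ℝ (Fin d) | ⟪a i, x⟫ = b i})ᶜ :
        Set (EuclideanSpace ℝ (Fin d)))) ∧
    Nat.card (ConnectedComponents
      ((⋃ i : Fin n, {x : EuclideanSpace ℝ (Fin d) | ⟪a i, x⟫ = b i})ᶜ :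
        Set (EuclideanSpace ℝ (Fin d)))) ≤
      ∑ i ∈ Finset.range (d + 1), n.choose i :=
  buck_chamber_upper_bound_general d n a b
end

section
/- Buck's exact chamber count in general position: let H₁, …, Hₙ be n affine hyperplanes in ℝ^d, where H_i = {x | ⟪a_i, x⟫ = b_i} with a_i ≠ 0, in general position, meaning: for every index set S of size at most d, the vectors (a_i)_{i ∈ S} are linearly independent and the intersection ⋂_{i ∈ S} H_i is nonempty, and for every index set S of size d + 1 the intersection ⋂_{i ∈ S} H_i is empty. Then the number of connected components of the complement ℝ^d \ (H₁ ∪ ⋯ ∪ Hₙ) is exactly ∑_{i=0}^{d} C(n, i). -/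
/-!
The connected components of the complement are exactly the nonempty sign regions
`{x | sign (⟪aᵢ, x⟫ - bᵢ) = σᵢ for all i}`: each is open and convex, and the sign vector is
locally constant off the hyperplanes. Regions are counted by deletion–restriction: adding a
hyperplane `H` splits in two exactly the regions that meet `H`, and these correspond to the
regions of the arrangement induced on `H ≅ ℝ^(d-1)`, which is again in general position. The
number `r(n, d)` of regions thus satisfies `r(n, d) = r(n-1, d) + r(n-1, d-1)`, Pascal's rule
for `∑_{i ≤ d} C(n, i)`.
-/

open scoped RealInnerProductSpace

open Finset Module Submodule

theorem natCard_connectedComponents_eq_natCard_range {X Y : Type*} [TopologicalSpace X]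
    {f : X → Y} (hf : IsLocallyConstant f) (hfib : ∀ y, IsPreconnected (f ⁻¹' {y})) :
    Nat.card (ConnectedComponents X) = Nat.card (Set.range f) := by
  have hker : connectedComponentSetoid X = Setoid.ker f := by
    ext x y
    change connectedComponent x = connectedComponent y ↔ f x = f y
    constructor
    · intro hxy
      exact hf.apply_eq_of_isPreconnected isPreconnected_connectedComponent
        mem_connectedComponent (hxy ▸ mem_connectedComponent)
    · intro hxy
      exact connectedComponent_eq <|
        (hfib (f x)).subset_connectedComponent rfl hxy.symm
  change Nat.card (Quotient (connectedComponentSetoid X)) = _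
  rw [hker]
  exact Nat.card_congr (Setoid.quotientKerEquivRange f)

section InnerProductSpace

variable {E : Type*} [NormedAddCommGroup E] [InnerProductSpace ℝ E]

theorem IsOpen.exists_mem_inner_gt {s : Set E} (hs : IsOpen s) {x : E} (hx : x ∈ s) {c : E}
    (hc : c ≠ 0) : ∃ y ∈ s, ⟪c, x⟫ < ⟪c, y⟫ := by
  have hline : Filter.Tendsto (fun t : ℝ => x + t • c) (nhdsWithin 0 (Set.Ioi 0)) (nhds x) := by
    refine tendsto_nhdsWithin_of_tendsto_nhds ?_
    exact (by fun_prop : Continuous fun t : ℝ => x + t • c).tendsto' 0 x (by simp)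
  obtain ⟨t, hts, ht⟩ := ((hline.eventually (hs.mem_nhds hx)).and self_mem_nhdsWithin).exists
  refine ⟨_, hts, ?_⟩
  rw [inner_add_right, real_inner_smul_right, real_inner_self_eq_norm_sq]
  have : 0 < t * ‖c‖ ^ 2 := mul_pos ht (by positivity)
  linarith

theorem IsOpen.exists_mem_inner_lt {s : Set E} (hs : IsOpen s) {x : E} (hx : x ∈ s) {c : E}
    (hc : c ≠ 0) : ∃ y ∈ s, ⟪c, y⟫ < ⟪c, x⟫ := by
  obtain ⟨y, hy, hlt⟩ := hs.exists_mem_inner_gt hx (neg_ne_zero.2 hc)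
  exact ⟨y, hy, by simpa [inner_neg_left] using hlt⟩

theorem IsOpen.exists_lt_inner_or_exists_inner_lt {s : Set E} (hs : IsOpen s) {x : E} (hx : x ∈ s)
    {c : E} (hc : c ≠ 0) (e : ℝ) : (∃ y ∈ s, e < ⟪c, y⟫) ∨ ∃ y ∈ s, ⟪c, y⟫ < e := by
  obtain ⟨y, hy, hxy⟩ := hs.exists_mem_inner_gt hx hc
  rcases lt_or_ge e ⟪c, y⟫ with hey | hye
  · exact .inl ⟨y, hy, hey⟩
  · exact .inr ⟨x, hx, hxy.trans_le hye⟩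

theorem Convex.exists_inner_eq {s : Set E} (hs : Convex ℝ s) {x y : E} (hx : x ∈ s) (hy : y ∈ s)
    {c : E} {e : ℝ} (hxe : ⟪c, x⟫ ≤ e) (hye : e ≤ ⟪c, y⟫) : ∃ z ∈ s, ⟪c, z⟫ = e :=
  hs.isPreconnected.intermediate_value hx hy (continuous_const.inner continuous_id).continuousOn
    ⟨hxe, hye⟩

theorem LinearIndependent.orthogonalProjectionOnto_orthogonal_span_singleton {κ : Type*}
    {w : κ → E} {c : E} (hw : LinearIndependent ℝ w) (hc : c ∉ span ℝ (Set.range w)) :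
    LinearIndependent ℝ fun i => (ℝ ∙ c)ᗮ.orthogonalProjectionOnto (w i) := by
  refine hw.map (f := ((ℝ ∙ c)ᗮ.orthogonalProjectionOnto : E →ₗ[ℝ] (ℝ ∙ c)ᗮ)) ?_
  rw [ker_orthogonalProjectionOnto, orthogonal_orthogonal]
  exact disjoint_span_singleton.2 fun h => absurd h hc

end InnerProductSpace

theorem Nat.sum_range_succ_succ_choose_succ (n d : ℕ) :
    ∑ i ∈ range (d + 2), (n + 1).choose i =
      ∑ i ∈ range (d + 2), n.choose i + ∑ i ∈ range (d + 1), n.choose i := by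
  rw [sum_range_succ' _ (d + 1), sum_range_succ' (fun i => n.choose i) (d + 1)]
  simp only [Nat.choose_succ_succ', sum_add_distrib, Nat.choose_zero_right]
  ring

theorem Set.ncard_eq_ncard_snoc_true_add_ncard_snoc_false {n : ℕ} (P : Set (Fin (n + 1) → Bool)) :
    P.ncard = {σ : Fin n → Bool | Fin.snoc σ true ∈ P}.ncard +
      {σ : Fin n → Bool | Fin.snoc σ false ∈ P}.ncard := by
  classical
  simp only [Set.ncard_eq_toFinset_card', ← Set.filter_mem_univ_eq_toFinset, card_filter]
  rw [← (Fin.snocEquiv fun _ => Bool).sum_comp, Fintype.sum_prod_type, Fintype.sum_bool]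
  rfl

namespace HyperplaneArrangement

variable {ι E F : Type*} [NormedAddCommGroup E] [InnerProductSpace ℝ E]
  [NormedAddCommGroup F] [InnerProductSpace ℝ F]

def signRegion (a : ι → E) (b : ι → ℝ) (σ : ι → Bool) : Set E :=
  {x | ∀ i, if σ i then b i < ⟪a i, x⟫ else ⟪a i, x⟫ < b i}

noncomputable def signVector (a : ι → E) (b : ι → ℝ) (x : E) : ι → Bool :=
  fun i => decide (b i < ⟪a i, x⟫)

def realizedSigns (a : ι → E) (b : ι → ℝ) : Set (ι → Bool) :=
  {σ | (signRegion a b σ).Nonempty}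

def flat (a : ι → E) (b : ι → ℝ) (S : Finset ι) : Set E :=
  ⋂ i ∈ S, {x | ⟪a i, x⟫ = b i}

structure GeneralPosition (d : ℕ) (a : ι → E) (b : ι → ℝ) : Prop where
  linearIndependent {S : Finset ι} : S.card ≤ d → LinearIndependent ℝ fun i : S => a i
  flat_nonempty {S : Finset ι} : S.card ≤ d → (flat a b S).Nonempty
  flat_eq_empty {S : Finset ι} : S.card = d + 1 → flat a b S = ∅

theorem signRegion_eq_compl_inter_preimage (a : ι → E) (b : ι → ℝ) (σ : ι → Bool) :
    signRegion a b σ = (⋃ i, {x | ⟪a i, x⟫ = b i})ᶜ ∩ signVector a b ⁻¹' {σ} := by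
  ext x
  simp only [signRegion, signVector, Set.mem_ofPred_eq, Set.mem_inter_iff, Set.mem_compl_iff,
    Set.mem_iUnion, not_exists, Set.mem_preimage, Set.mem_singleton_iff, funext_iff,
    ← forall_and]
  refine forall_congr' fun i => ?_
  cases σ i <;> simp <;> grind

theorem signRegion_subset_compl_iUnion (a : ι → E) (b : ι → ℝ) (σ : ι → Bool) :
    signRegion a b σ ⊆ (⋃ i, {x | ⟪a i, x⟫ = b i})ᶜ := by
  rw [signRegion_eq_compl_inter_preimage]
  exact Set.inter_subset_left

theorem realizedSigns_eq_image (a : ι → E) (b : ι → ℝ) :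
    realizedSigns a b = signVector a b '' (⋃ i, {x | ⟪a i, x⟫ = b i})ᶜ := by
  ext σ
  simp [realizedSigns, signRegion_eq_compl_inter_preimage, Set.Nonempty]

theorem convex_signRegion (a : ι → E) (b : ι → ℝ) (σ : ι → Bool) :
    Convex ℝ (signRegion a b σ) := by
  rw [signRegion, Set.ofPred_forall]
  refine convex_iInter fun i => ?_
  cases σ i
  · exact convex_halfSpace_lt (innerₛₗ ℝ (a i)).isLinear _
  · exact convex_halfSpace_gt (innerₛₗ ℝ (a i)).isLinear _

theorem isOpen_signRegion [Finite ι] (a : ι → E) (b : ι → ℝ) (σ : ι → Bool) :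
    IsOpen (signRegion a b σ) := by
  rw [signRegion, Set.ofPred_forall]
  refine isOpen_iInter_of_finite fun i => ?_
  cases σ i
  · exact isOpen_lt (continuous_const.inner continuous_id) continuous_const
  · exact isOpen_lt continuous_const (continuous_const.inner continuous_id)

theorem natCard_connectedComponents_compl_iUnion [Finite ι] (a : ι → E) (b : ι → ℝ) :
    Nat.card (ConnectedComponents ((⋃ i, {x : E | ⟪a i, x⟫ = b i})ᶜ : Set E)) =
      (realizedSigns a b).ncard := by
  set X := (⋃ i, {x : E | ⟪a i, x⟫ = b i})ᶜ
  have hfib : ∀ σ, (signVector a b ∘ (↑) : X → ι → Bool) ⁻¹' {σ} = (↑) ⁻¹' signRegion a b σ := by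
    intro σ
    ext x
    rw [Set.mem_preimage, Set.mem_preimage, signRegion_eq_compl_inter_preimage, Set.mem_inter_iff,
      and_iff_right x.2]
    rfl
  rw [natCard_connectedComponents_eq_natCard_range (f := signVector a b ∘ (↑)), Set.range_comp,
    Subtype.range_coe, ← realizedSigns_eq_image, Nat.card_coe_set_eq]
  · exact IsLocallyConstant.iff_isOpen_fiber.2 fun σ =>
      hfib σ ▸ (isOpen_signRegion a b σ).preimage continuous_subtype_val
  · intro σ
    rw [hfib, ← Topology.IsInducing.subtypeVal.isPreconnected_image, Subtype.image_preimage_coe,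
      Set.inter_eq_right.2 (signRegion_subset_compl_iUnion a b σ)]
    exact (convex_signRegion a b σ).isPreconnected

theorem signRegion_snoc {n : ℕ} (a : Fin (n + 1) → E) (b : Fin (n + 1) → ℝ) (σ : Fin n → Bool)
    (s : Bool) :
    signRegion a b (Fin.snoc σ s) = signRegion (Fin.init a) (Fin.init b) σ ∩
      {x | if s then b (Fin.last n) < ⟪a (Fin.last n), x⟫
        else ⟪a (Fin.last n), x⟫ < b (Fin.last n)} := by
  ext x
  simp only [signRegion, Set.mem_inter_iff, Set.mem_ofPred_eq, Fin.forall_fin_succ',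
    Fin.snoc_castSucc, Fin.snoc_last, Fin.init]

theorem ncard_realizedSigns_snoc {n : ℕ} (a : Fin (n + 1) → E) (b : Fin (n + 1) → ℝ)
    (hc : a (Fin.last n) ≠ 0) :
    (realizedSigns a b).ncard = (realizedSigns (Fin.init a) (Fin.init b)).ncard +
      {σ | (signRegion (Fin.init a) (Fin.init b) σ ∩
        {x | ⟪a (Fin.last n), x⟫ = b (Fin.last n)}).Nonempty}.ncard := by
  rw [Set.ncard_eq_ncard_snoc_true_add_ncard_snoc_false, ← Set.ncard_union_add_ncard_inter]
  have hR := isOpen_signRegion (Fin.init a) (Fin.init b)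
  congr 2 <;> ext σ <;>
    simp only [realizedSigns, signRegion_snoc, Set.inter_nonempty, Set.mem_union, Set.mem_inter_iff,
      Set.mem_ofPred_eq, if_true, Bool.false_eq_true, if_false]
  · constructor
    · rintro (⟨x, hx, -⟩ | ⟨x, hx, -⟩) <;> exact ⟨x, hx⟩
    · rintro ⟨x, hx⟩
      exact (hR σ).exists_lt_inner_or_exists_inner_lt hx hc _
  · constructor
    · rintro ⟨⟨x, hx, hxe⟩, ⟨y, hy, hye⟩⟩
      exact (convex_signRegion _ _ σ).exists_inner_eq hy hx hye.le hxe.le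
    · rintro ⟨x, hx, hxe⟩
      rw [← hxe]
      exact ⟨(hR σ).exists_mem_inner_gt hx hc, (hR σ).exists_mem_inner_lt hx hc⟩

theorem preimage_signRegion {a : ι → E} {b : ι → ℝ} {a' : ι → F} {b' : ι → ℝ} {φ : F → E}
    (h : ∀ i y, ⟪a' i, y⟫ - b' i = ⟪a i, φ y⟫ - b i) (σ : ι → Bool) :
    φ ⁻¹' signRegion a b σ = signRegion a' b' σ := by
  ext y
  refine forall_congr' fun i => ?_
  have := h i y
  cases σ i <;> simp only [Bool.false_eq_true, if_true, if_false] <;> constructor <;> intro <;>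
    linarith

theorem preimage_flat {a : ι → E} {b : ι → ℝ} {a' : ι → F} {b' : ι → ℝ} {φ : F → E}
    (h : ∀ i y, ⟪a' i, y⟫ - b' i = ⟪a i, φ y⟫ - b i) (S : Finset ι) :
    φ ⁻¹' flat a b S = flat a' b' S := by
  ext y
  simp only [flat, Set.mem_preimage, Set.mem_iInter₂, Set.mem_ofPred_eq]
  refine forall₂_congr fun i _ => ?_
  rw [← sub_eq_zero, ← h, sub_eq_zero]

theorem flat_image {κ : Type*} [DecidableEq ι] {a : ι → E} {b : ι → ℝ} (e : κ → ι)
    (S : Finset κ) :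
    flat a b (S.image e) = flat (a ∘ e) (b ∘ e) S :=
  Finset.set_biInter_finset_image

theorem flat_insert [DecidableEq ι] {a : ι → E} {b : ι → ℝ} (j : ι) (S : Finset ι) :
    flat a b (insert j S) = {x | ⟪a j, x⟫ = b j} ∩ flat a b S :=
  Finset.set_biInter_insert _ _ _

/-- With `restrictOffset`, the arrangement induced on the affine subspace `x₀ + K`, written in the
coordinates `y ↦ y + x₀` of `K`. -/
noncomputable def restrictNormal (K : Submodule ℝ E) [K.HasOrthogonalProjection] (a : ι → E) :
    ι → K :=
  fun i => K.orthogonalProjectionOnto (a i)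

def restrictOffset (x₀ : E) (a : ι → E) (b : ι → ℝ) : ι → ℝ :=
  fun i => b i - ⟪a i, x₀⟫

theorem inner_restrictNormal_sub_restrictOffset (K : Submodule ℝ E) [K.HasOrthogonalProjection]
    (x₀ : E) (a : ι → E) (b : ι → ℝ) (i : ι) (y : K) :
    ⟪restrictNormal K a i, y⟫ - restrictOffset x₀ a b i = ⟪a i, (y : E) + x₀⟫ - b i := by
  simp only [restrictNormal, restrictOffset, inner_orthogonalProjectionOnto_eq_of_mem_right,
    inner_add_right]
  ring

theorem range_coe_add_orthogonal_span_singleton (c x₀ : E) :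
    Set.range (fun y : (ℝ ∙ c)ᗮ => (y : E) + x₀) = {x | ⟪c, x⟫ = ⟪c, x₀⟫} := by
  ext x
  constructor
  · rintro ⟨y, rfl⟩
    simp [inner_add_right, mem_orthogonal_singleton_iff_inner_right.1 y.2]
  · intro hx
    refine ⟨⟨x - x₀, mem_orthogonal_singleton_iff_inner_right.2 ?_⟩, sub_add_cancel x x₀⟩
    rw [inner_sub_right, hx, sub_self]

theorem image_flat_restrict (c x₀ : E) (a : ι → E) (b : ι → ℝ) (S : Finset ι) :
    (fun y : (ℝ ∙ c)ᗮ => (y : E) + x₀) ''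
        flat (restrictNormal (ℝ ∙ c)ᗮ a) (restrictOffset x₀ a b) S =
      flat a b S ∩ {x | ⟪c, x⟫ = ⟪c, x₀⟫} := by
  rw [← preimage_flat (inner_restrictNormal_sub_restrictOffset _ x₀ a b),
    Set.image_preimage_eq_inter_range, range_coe_add_orthogonal_span_singleton]

theorem realizedSigns_restrict (c x₀ : E) (a : ι → E) (b : ι → ℝ) :
    realizedSigns (restrictNormal (ℝ ∙ c)ᗮ a) (restrictOffset x₀ a b) =
      {σ | (signRegion a b σ ∩ {x | ⟪c, x⟫ = ⟪c, x₀⟫}).Nonempty} := by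
  ext σ
  rw [realizedSigns, Set.mem_ofPred_eq, Set.mem_ofPred_eq,
    ← preimage_signRegion (inner_restrictNormal_sub_restrictOffset _ x₀ a b),
    ← range_coe_add_orthogonal_span_singleton, ← Set.image_preimage_eq_inter_range,
    Set.image_nonempty]

theorem GeneralPosition.comp_injective {κ : Type*} {d : ℕ} {a : ι → E} {b : ι → ℝ} {e : κ → ι}
    (h : GeneralPosition d a b) (he : Function.Injective e) :
    GeneralPosition d (a ∘ e) (b ∘ e) := by
  classical
  have hcard (S : Finset κ) : (S.image e).card = S.card := card_image_of_injective S he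
  refine ⟨fun {S} hS => ?_, fun {S} hS => ?_, fun {S} hS => ?_⟩
  · exact (h.linearIndependent ((hcard S).trans_le hS)).comp
      (fun i : S => ⟨e i, mem_image_of_mem e i.2⟩)
      fun i j hij => Subtype.ext (he (congrArg Subtype.val hij))
  · rw [← flat_image]
    exact h.flat_nonempty ((hcard S).trans_le hS)
  · rw [← flat_image]
    exact h.flat_eq_empty ((hcard S).trans hS)

theorem GeneralPosition.ne_zero {d : ℕ} {a : ι → E} {b : ι → ℝ} (h : GeneralPosition (d + 1) a b)
    (i : ι) : a i ≠ 0 :=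
  (h.linearIndependent (S := ({i} : Finset ι)) (by simp)).ne_zero ⟨i, mem_singleton_self i⟩

theorem GeneralPosition.exists_inner_eq {d : ℕ} {a : ι → E} {b : ι → ℝ}
    (h : GeneralPosition (d + 1) a b) (i : ι) : ∃ x, ⟪a i, x⟫ = b i := by
  simpa [flat, Set.Nonempty] using h.flat_nonempty (S := ({i} : Finset ι)) (by simp)

theorem GeneralPosition.restrict {d n : ℕ} {a : Fin (n + 1) → E} {b : Fin (n + 1) → ℝ}
    (h : GeneralPosition (d + 1) a b) {x₀ : E} (hx₀ : ⟪a (Fin.last n), x₀⟫ = b (Fin.last n)) :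
    GeneralPosition d (restrictNormal (ℝ ∙ a (Fin.last n))ᗮ (Fin.init a))
      (restrictOffset x₀ (Fin.init a) (Fin.init b)) := by
  set T : Finset (Fin n) → Finset (Fin (n + 1)) :=
    fun S => insert (Fin.last n) (S.image Fin.castSucc)
  have hcard (S : Finset (Fin n)) : (T S).card = S.card + 1 := by
    rw [card_insert_of_notMem (by simp [Fin.castSucc_ne_last]),
      card_image_of_injective _ (Fin.castSucc_injective n)]
  have hflat (S : Finset (Fin n)) : (fun y : (ℝ ∙ a (Fin.last n))ᗮ => (y : E) + x₀) ''
      flat (restrictNormal _ (Fin.init a)) (restrictOffset x₀ (Fin.init a) (Fin.init b)) S =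
      flat a b (T S) := by
    rw [image_flat_restrict, hx₀, flat_insert, flat_image, Set.inter_comm]
    rfl
  refine ⟨fun {S} hS => ?_, fun {S} hS => ?_, fun {S} hS => ?_⟩
  · let g : Option S → T S := fun o => o.elim ⟨Fin.last n, mem_insert_self _ _⟩
      fun i => ⟨Fin.castSucc i, mem_insert_of_mem (mem_image_of_mem _ i.2)⟩
    have hg : Function.Injective g := by
      rintro (_ | i) (_ | j) hij <;> simp only [g, Option.elim, Subtype.mk.injEq] at hij
      · rfl
      · exact absurd hij.symm (Fin.castSucc_ne_last _)
      · exact absurd hij (Fin.castSucc_ne_last _)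
      · exact congrArg some (Subtype.ext (Fin.castSucc_injective n hij))
    have hli := (h.linearIndependent (S := T S) (by rw [hcard]; omega)).comp g hg
    rw [show (fun i : T S => a i) ∘ g =
        fun o => Option.casesOn' o (a (Fin.last n)) fun i : S => Fin.init a i from
      funext fun o => by cases o <;> rfl, linearIndependent_option'] at hli
    exact hli.1.orthogonalProjectionOnto_orthogonal_span_singleton hli.2
  · rw [← Set.image_nonempty, hflat]
    exact h.flat_nonempty (by rw [hcard]; omega)
  · rw [← Set.image_eq_empty, hflat]
    exact h.flat_eq_empty (by rw [hcard, hS])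

theorem ncard_realizedSigns_of_generalPosition [FiniteDimensional ℝ E] {n d : ℕ}
    {a : Fin n → E} {b : Fin n → ℝ} (hd : finrank ℝ E = d) (h : GeneralPosition d a b) :
    (realizedSigns a b).ncard = ∑ i ∈ range (d + 1), n.choose i := by
  induction n generalizing E d with
  | zero =>
    have : realizedSigns a b = Set.univ :=
      Set.eq_univ_of_forall fun σ => ⟨0, fun i => i.elim0⟩
    simp [this, sum_range_succ']
  | succ n ih =>
    cases d with
    | zero =>
      have : Subsingleton E := finrank_zero_iff.mp hd
      have hempty (i : Fin (n + 1)) : {x : E | ⟪a i, x⟫ = b i} = ∅ := by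
        simpa [flat] using h.flat_eq_empty (S := {i}) (by simp)
      simp only [realizedSigns_eq_image, hempty, Set.iUnion_empty, Set.compl_empty, Set.image_univ,
        zero_add, sum_range_one, Nat.choose_zero_right]
      exact Set.ncard_eq_one.2 ⟨signVector a b 0,
        Set.range_eq_singleton_iff.2 fun x => by rw [Subsingleton.elim x 0]⟩
    | succ d =>
      obtain ⟨x₀, hx₀⟩ := h.exists_inner_eq (Fin.last n)
      have hc := h.ne_zero (Fin.last n)
      have : Fact (finrank ℝ E = d + 1) := ⟨hd⟩
      rw [ncard_realizedSigns_snoc a b hc, ← hx₀, ← realizedSigns_restrict,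
        ih (a := Fin.init a) (b := Fin.init b) hd (h.comp_injective (Fin.castSucc_injective n)),
        ih (finrank_orthogonal_span_singleton hc) (h.restrict hx₀),
        Nat.sum_range_succ_succ_choose_succ]

end HyperplaneArrangement

theorem buck_chamber_count_general_position_general (d n : ℕ)
    (a : Fin n → EuclideanSpace ℝ (Fin d)) (b : Fin n → ℝ)
    (hgen₁ : ∀ S : Finset (Fin n), S.card ≤ d →
      LinearIndependent ℝ (fun i : S => a i) ∧
      (⋂ i ∈ S, {x : EuclideanSpace ℝ (Fin d) | ⟪a i, x⟫ = b i}).Nonempty)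
    (hgen₂ : ∀ S : Finset (Fin n), S.card = d + 1 →
      (⋂ i ∈ S, {x : EuclideanSpace ℝ (Fin d) | ⟪a i, x⟫ = b i}) = ∅) :
    Nat.card (ConnectedComponents
      ((⋃ i : Fin n, {x : EuclideanSpace ℝ (Fin d) | ⟪a i, x⟫ = b i})ᶜ :
        Set (EuclideanSpace ℝ (Fin d)))) =
      ∑ i ∈ Finset.range (d + 1), n.choose i := by
  have h : HyperplaneArrangement.GeneralPosition d a b :=
    ⟨fun hS => (hgen₁ _ hS).1, fun hS => (hgen₁ _ hS).2, hgen₂ _⟩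
  rw [HyperplaneArrangement.natCard_connectedComponents_compl_iUnion,
    HyperplaneArrangement.ncard_realizedSigns_of_generalPosition finrank_euclideanSpace_fin h]

/-- Buck's exact count: `n` affine hyperplanes in `ℝ^d` in general position (every at most
`d` of the defining normal vectors are linearly independent with the corresponding
hyperplanes having a common point, and no `d+1` of the hyperplanes meet) cut the
complement of their union into exactly `∑_{i=0}^{d} C(n,i)` connected components. -/
theorem buck_chamber_count_general_position (d n : ℕ)
    (a : Fin n → EuclideanSpace ℝ (Fin d)) (b : Fin n → ℝ)
    (ha : ∀ i, a i ≠ 0)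
    (hgen₁ : ∀ S : Finset (Fin n), S.card ≤ d →
      LinearIndependent ℝ (fun i : S => a i) ∧
      (⋂ i ∈ S, {x : EuclideanSpace ℝ (Fin d) | ⟪a i, x⟫ = b i}).Nonempty)
    (hgen₂ : ∀ S : Finset (Fin n), S.card = d + 1 →
      (⋂ i ∈ S, {x : EuclideanSpace ℝ (Fin d) | ⟪a i, x⟫ = b i}) = ∅) :
    Nat.card (ConnectedComponents
      ((⋃ i : Fin n, {x : EuclideanSpace ℝ (Fin d) | ⟪a i, x⟫ = b i})ᶜ :
        Set (EuclideanSpace ℝ (Fin d)))) =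
      ∑ i ∈ Finset.range (d + 1), n.choose i :=
  buck_chamber_count_general_position_general d n a b hgen₁ hgen₂
end
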